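/- If i is not a jump for a wandering N-gon T satisfying the standing assumptions (i.e., d·s_{N−2}(T_i) ≤ s_{N−2}(T_{i+1})), then for every k ∈ {1, …, N−2}, the image-hole of H_k(T_i) equals H_k(T_{i+1}). -/

import Mathlib

/-!
Write each hole of `T_n` as the open arc between two cyclically consecutive points `u, w` of
`T_n`. As `f` preserves the cyclic order on `T_n`, the arc `(f u, f w)` is a hole of `T_{n+1}`,
of length `d · len` when `d · len < 1`.

Small holes never tie: a tie of length `t < ε` at time `n` gives a tie of length `d t` at time
`n + 1`, and so on until the common length lies in `[ε, d ε)`. There the two tied holes are the two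
largest ones, so every hole is shorter than `d ε ≤ 1 / N`, while the lengths add up to `1`.

So the `N - 2` smallest holes of `T_i` have distinct lengths. Their images have `d` times these
lengths, which by the no-jump inequality keeps them among the `N - 2` smallest holes of `T_{i+1}`,
in the same order; a strictly increasing self-map of `{0, …, N - 3}` is the identity.
-/

open MeasureTheory Set Metric Filter Topology

noncomputable section

abbrev S1 := AddCircle (1 : ℝ)

def fd (d : ℕ) : S1 → S1 := fun x => d • x

def len (A : Set S1) : ℝ := (volume A).toReal

def IsHole (B H : Set S1) : Prop := ∃ x ∈ Bᶜ, H = connectedComponentIn Bᶜ x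

def openArc (u w : S1) : Set S1 := {x | SBtw.sbtw u x w}

def OrientPresOn (g : S1 → S1) (B : Set S1) : Prop :=
  Set.InjOn g B ∧ ∀ a ∈ B, ∀ b ∈ B, ∀ c ∈ B, SBtw.sbtw a b c → SBtw.sbtw (g a) (g b) (g c)

def emb (x : S1) : ℂ := (AddCircle.toCircle x : ℂ)

def chord (a b : S1) : Set ℂ := segment ℝ (emb a) (emb b)

def CH (A : Set S1) : Set ℂ := convexHull ℝ (emb '' A)

def Wandering (d N : ℕ) (T : Set S1) : Prop :=
  ∀ i j : ℕ, ((fd d)^[i] '' T).ncard = N ∧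
    (i ≠ j → Disjoint (CH ((fd d)^[i] '' T)) (CH ((fd d)^[j] '' T)))

def IsHoleEnum (B : Set S1) {N : ℕ} (H : Fin N → Set S1) : Prop :=
  Function.Injective H ∧ (∀ k, IsHole B (H k)) ∧ (∀ G, IsHole B G → ∃ k, H k = G) ∧
  ∀ k l : Fin N, k ≤ l → len (H k) ≤ len (H l)

def rem (d : ℕ) (s : ℝ) : ℝ := s - (⌊(d : ℝ) * s⌋ : ℝ) / d

def ImageHoleRel (g : S1 → S1) (H K : Set S1) : Prop :=
  ∃ u w : S1, u ≠ w ∧ H = openArc u w ∧ K = openArc (g u) (g w)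

def InLimitSet (d : ℕ) (T : Set S1) (a b : S1) : Prop :=
  ∃ φ : ℕ → ℕ, StrictMono φ ∧ ∃ u v : ℕ → S1,
    (∀ n, u n ∈ (fd d)^[φ n] '' T ∧ v n ∈ (fd d)^[φ n] '' T) ∧
    Tendsto (fun n => hausdorffDist (chord (u n) (v n)) (chord a b)) atTop (nhds 0)

lemma sbtw_of_not_sbtw {α : Type*} [CircularOrder α] {a b c : α} (h : ¬ sbtw a b c)
    (hab : a ≠ b) (hbc : b ≠ c) (hca : c ≠ a) : sbtw c b a := by
  rw [sbtw_iff_not_btw]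
  intro h'
  rcases btw_antisymm h' (btw_iff_not_sbtw.2 h) with h | h | h
  exacts [hab h, hbc h, hca h]

section Sorted

variable {N : ℕ} {β : Type*} [LinearOrder β]

-- Only two indices lie above `m`, so a tie above `m` is a tie for the largest value.
lemma Monotone.le_of_tie_above {ℓ : Fin N → β} (hℓ : Monotone ℓ) {m a b : Fin N}
    (hm : N ≤ m.val + 3) (hab : a ≠ b) (hlen : ℓ a = ℓ b) (hma : ℓ m < ℓ a) (c : Fin N) :
    ℓ c ≤ ℓ a := by
  have ha : m < a := hℓ.reflect_lt hma
  have hb : m < b := hℓ.reflect_lt (hlen ▸ hma)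
  rcases le_or_gt c m with hc | hc
  · exact (hℓ hc).trans hma.le
  · obtain rfl | rfl : c = a ∨ c = b := by
      rw [Fin.lt_def] at ha hb hc
      rw [Ne, Fin.ext_iff] at hab
      rw [Fin.ext_iff, Fin.ext_iff]
      omega
    exacts [le_rfl, hlen.ge]

theorem Monotone.apply_eq_self_of_comp_eq {ℓ ℓ' : Fin N → β} (hℓ : Monotone ℓ)
    (hℓ' : Monotone ℓ') {φ : β → β} (hφ : StrictMono φ) {σ : Fin N → Fin N} {m : Fin N}
    (hσ : ∀ c ≤ m, ℓ' (σ c) = φ (ℓ c)) (hinj : ∀ a ≤ m, ∀ b, ℓ a = ℓ b → a = b)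
    (hinj' : ∀ b, ℓ' m = ℓ' b → m = b) (hjump : φ (ℓ m) ≤ ℓ' m) {c : Fin N} (hc : c ≤ m) :
    σ c = c := by
  have hmaps : ∀ c ≤ m, σ c ≤ m := by
    intro c hc
    by_contra! h
    have hle : ℓ' (σ c) ≤ ℓ' m := by rw [hσ c hc]; exact (hφ.monotone (hℓ hc)).trans hjump
    exact h.ne (hinj' _ (le_antisymm (hℓ' h.le) hle))
  have hmono : StrictMono fun c : Iic m => (⟨σ c, hmaps c c.2⟩ : Iic m) := by
    intro c c' hlt
    have hℓlt : ℓ c < ℓ c' :=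
      (hℓ hlt.le).lt_of_ne fun h => hlt.ne (Subtype.ext (hinj c c.2 c' h))
    exact hℓ'.reflect_lt (by rw [hσ c c.2, hσ c' c'.2]; exact hφ hℓlt)
  exact congrArg Subtype.val (hmono.apply_eq (x := ⟨c, hc⟩))

end Sorted

def ccwDist (u x : S1) : ℝ := AddCircle.equivIco 1 0 (x - u)

section Circle

variable {u w x : S1}

lemma ccwDist_mem (u x : S1) : ccwDist u x ∈ Ico (0 : ℝ) 1 := by
  simpa [ccwDist] using (AddCircle.equivIco 1 0 (x - u)).2

lemma coe_ccwDist (u x : S1) : (ccwDist u x : S1) = x - u := AddCircle.coe_equivIco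

lemma ccwDist_eq_of_coe {r : ℝ} (hr : r ∈ Ico (0 : ℝ) 1) (h : (r : S1) = x - u) :
    ccwDist u x = r := by
  rw [ccwDist, ← h, AddCircle.equivIco_coe_of_mem (by simpa using hr)]

lemma ccwDist_injective (u : S1) : Function.Injective (ccwDist u) := fun x y h =>
  sub_left_inj.1 ((coe_ccwDist u x).symm.trans (h ▸ coe_ccwDist u y))

@[simp] lemma ccwDist_self (u : S1) : ccwDist u u = 0 :=
  ccwDist_eq_of_coe (by simp) (by simp)

lemma ccwDist_pos : 0 < ccwDist u x ↔ x ≠ u := by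
  rw [(ccwDist_mem u x).1.lt_iff_ne', Ne, ← ccwDist_self u, (ccwDist_injective u).eq_iff]

lemma ccwDist_add_coe (u : S1) {t : ℝ} (ht : t ∈ Ico (0 : ℝ) 1) : ccwDist u (u + t) = t :=
  ccwDist_eq_of_coe ht (by abel)

lemma ccwDist_of_lt (h : ccwDist u x < ccwDist u w) :
    ccwDist w x = ccwDist u x - ccwDist u w + 1 := by
  obtain ⟨hx, -⟩ := ccwDist_mem u x
  refine ccwDist_eq_of_coe ⟨by linarith [(ccwDist_mem u w).2], by linarith⟩ ?_
  rw [AddCircle.coe_add, AddCircle.coe_sub, coe_ccwDist, coe_ccwDist, AddCircle.coe_period]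
  abel

-- `btw` on the circle compares a representative in `[0, 1)` with one in `(0, 1]`.
lemma equivIoc_sub (u y : S1) :
    (AddCircle.equivIoc 1 0 (y - u) : ℝ) = if y = u then 1 else ccwDist u y := by
  split_ifs with h
  · rw [h, sub_self, ← AddCircle.coe_period, AddCircle.equivIoc_coe_of_mem (by simp)]
  · rw [← coe_ccwDist, AddCircle.equivIoc_coe_of_mem]
    exact ⟨ccwDist_pos.2 h, by simpa using (ccwDist_mem u y).2.le⟩

lemma mem_openArc : x ∈ openArc u w ↔ 0 < ccwDist u x ∧ ccwDist u x < ccwDist u w := by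
  show sbtw u x w ↔ _
  rw [sbtw_iff_btw_not_btw, btw_cyclic (a := w)]
  change ccwDist u x ≤ (AddCircle.equivIoc 1 0 (w - u) : ℝ) ∧
    ¬ ccwDist u w ≤ (AddCircle.equivIoc 1 0 (x - u) : ℝ) ↔ _
  rw [equivIoc_sub, equivIoc_sub]
  have hx := ccwDist_mem u x
  have hw := ccwDist_mem u w
  split_ifs with hwu hxu hxu
  · subst hwu hxu; simp
  · subst hwu
    simp only [ccwDist_self, not_le]
    constructor <;> intro h <;> linarith [h.2, hx.1]
  · subst hxu
    simp only [ccwDist_self, not_le]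
    constructor <;> intro h <;> linarith [h.2, h.1, hw.2]
  · have := ccwDist_pos.2 hxu
    constructor
    · rintro ⟨h1, h2⟩; exact ⟨this, lt_of_le_of_ne h1 fun h => h2 h.ge⟩
    · rintro ⟨-, h⟩; exact ⟨h.le, not_le.2 h⟩

end Circle

section Arc

variable {u w u' w' x : S1}

lemma openArc_eq_image (u w : S1) :
    openArc u w = (fun t : ℝ => u + t) '' Ioo 0 (ccwDist u w) := by
  ext x
  simp only [mem_openArc, mem_image, mem_Ioo]
  constructor
  · intro h
    exact ⟨ccwDist u x, h, by rw [coe_ccwDist]; abel⟩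
  · rintro ⟨t, ht, rfl⟩
    rwa [ccwDist_add_coe u ⟨ht.1.le, ht.2.trans (ccwDist_mem u w).2⟩]

lemma isOpen_openArc (u w : S1) : IsOpen (openArc u w) := by
  rw [openArc_eq_image]
  exact ((Homeomorph.addLeft u).isOpenMap.comp QuotientAddGroup.isOpenMap_coe) _ isOpen_Ioo

lemma isPreconnected_openArc (u w : S1) : IsPreconnected (openArc u w) := by
  rw [openArc_eq_image]
  exact isPreconnected_Ioo.image _
    (continuous_const.add (AddCircle.continuous_mk' 1)).continuousOn

lemma volume_coe_Ioo {r : ℝ} (hr : r ≤ 1) :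
    volume (((↑) : ℝ → S1) '' Ioo 0 r) = ENNReal.ofReal r := by
  rw [AddCircle.add_projection_respects_measure 1 0
    (QuotientAddGroup.isOpenMap_coe _ isOpen_Ioo).measurableSet, zero_add]
  convert Real.volume_Ioo using 2
  · ext y
    constructor
    · rintro ⟨⟨z, hz, hzy⟩, hy⟩
      have hz' : z ∈ Ioc (0 : ℝ) (0 + 1) := ⟨hz.1, by linarith [hz.2]⟩
      rwa [← (AddCircle.coe_eq_coe_iff_of_mem_Ioc hz' (by simpa using hy)).1 hzy]
    · intro hy
      exact ⟨⟨y, hy, rfl⟩, hy.1, by linarith [hy.2]⟩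
  · simp

lemma len_openArc (u w : S1) : len (openArc u w) = ccwDist u w := by
  rw [len, openArc_eq_image, show (fun t : ℝ => u + (t : S1)) = (u + ·) ∘ ((↑) : ℝ → S1) from rfl,
    image_comp, image_add_left, measure_preimage_add, volume_coe_Ioo (ccwDist_mem u w).2.le,
    ENNReal.toReal_ofReal (ccwDist_mem u w).1]

lemma openArc_nonempty (h : u ≠ w) : (openArc u w).Nonempty := by
  rw [openArc_eq_image]
  exact (nonempty_Ioo.2 (ccwDist_pos.2 h.symm)).image _

lemma mem_openArc_swap (huw : u ≠ w) (hxu : x ≠ u) (hxw : x ≠ w) (hx : x ∉ openArc u w) :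
    x ∈ openArc w u :=
  sbtw_of_not_sbtw hx hxu.symm hxw huw.symm

lemma disjoint_openArc_swap (u w : S1) : Disjoint (openArc u w) (openArc w u) :=
  Set.disjoint_left.2 fun _ (h1 : sbtw u _ w) h2 => sbtw_asymm h1 h2

lemma openArc_injective (h : u ≠ w) (heq : openArc u w = openArc u' w') : u = u' ∧ w = w' := by
  have hr : ccwDist u w = ccwDist u' w' := by rw [← len_openArc, heq, len_openArc]
  have hr0 := ccwDist_pos.2 h.symm
  suffices hu : u = u' by subst hu; exact ⟨rfl, ccwDist_injective u hr⟩
  by_contra hne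
  obtain ⟨ha0, ha1⟩ := ccwDist_mem u u'
  -- `u'` is not in the arc, so it lies beyond `w`; points just after `u'` then leave the arc
  have ha : ccwDist u w ≤ ccwDist u u' := by
    by_contra! hlt
    have hu' : u' ∈ openArc u' w' := heq ▸ mem_openArc.2 ⟨ccwDist_pos.2 (Ne.symm hne), hlt⟩
    exact sbtw_irrefl_left (show sbtw u' u' w' from hu')
  obtain ⟨t, ht0, ht⟩ := exists_between (lt_min hr0 (sub_pos.2 ha1))
  obtain ⟨htr, hta⟩ := lt_min_iff.1 ht
  have hx : u' + (t : S1) ∈ openArc u' w' := by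
    rw [mem_openArc, ccwDist_add_coe u' ⟨ht0.le, by linarith⟩, ← hr]
    exact ⟨ht0, htr⟩
  rw [← heq, mem_openArc, ccwDist_eq_of_coe (r := ccwDist u u' + t) ⟨by linarith, by linarith⟩
    (by rw [AddCircle.coe_add, coe_ccwDist]; abel)] at hx
  linarith [hx.2]

end Arc

instance : NullSingletonClass (volume : Measure S1) :=
  ⟨fun x => by simpa using AddCircle.volume_closedBall (T := 1) (x := x) 0⟩

def IsGap (B : Set S1) (u w : S1) : Prop :=
  u ∈ B ∧ w ∈ B ∧ u ≠ w ∧ Disjoint (openArc u w) B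

section Holes

variable {B : Set S1} {u w x : S1} {N : ℕ} {H : Fin N → Set S1}

lemma IsGap.subset_compl (h : IsGap B u w) : openArc u w ⊆ Bᶜ :=
  h.2.2.2.subset_compl_right

lemma IsGap.connectedComponentIn_eq (h : IsGap B u w) (hx : x ∈ openArc u w) :
    connectedComponentIn Bᶜ x = openArc u w := by
  have hsub := h.subset_compl
  obtain ⟨hu, hw, huw, -⟩ := h
  refine subset_antisymm ?_
    ((isPreconnected_openArc u w).subset_connectedComponentIn hx hsub)
  have hcover : Bᶜ ⊆ openArc u w ∪ openArc w u := fun y hy =>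
    or_iff_not_imp_left.2 <| mem_openArc_swap huw (fun h => hy (h ▸ hu)) (fun h => hy (h ▸ hw))
  exact isPreconnected_connectedComponentIn.subset_left_of_subset_union (isOpen_openArc u w)
    (isOpen_openArc w u) (disjoint_openArc_swap u w)
    ((connectedComponentIn_subset Bᶜ x).trans hcover)
    ⟨x, mem_connectedComponentIn (hsub hx), hx⟩

lemma IsGap.isHole (h : IsGap B u w) : IsHole B (openArc u w) := by
  obtain ⟨x, hx⟩ := openArc_nonempty h.2.2.1
  exact ⟨x, h.subset_compl hx, (h.connectedComponentIn_eq hx).symm⟩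

-- The gap around `x` runs from the last point of `B` before `x` to the first one after it.
lemma exists_isGap_mem_openArc (hB : B.Finite) (hB2 : B.Nontrivial) (hx : x ∉ B) :
    ∃ u w, IsGap B u w ∧ x ∈ openArc u w := by
  obtain ⟨w, hw, hwmin⟩ := B.exists_min_image (ccwDist x) hB hB2.nonempty
  obtain ⟨u, hu, humax⟩ := B.exists_max_image (ccwDist x) hB hB2.nonempty
  have hlt : ccwDist x w < ccwDist x u := by
    obtain ⟨a, ha, b, hb, hab⟩ := hB2
    by_contra! hle
    exact hab (ccwDist_injective x (le_antisymm ((humax a ha).trans (hle.trans (hwmin b hb)))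
      ((humax b hb).trans (hle.trans (hwmin a ha)))))
  have hxw : 0 < ccwDist x w := ccwDist_pos.2 fun h => hx (h ▸ hw)
  have hux : ccwDist u x = 1 - ccwDist x u := by
    rw [ccwDist_of_lt (ccwDist_self x ▸ hxw.trans hlt), ccwDist_self]; ring
  have huw : ccwDist u w = ccwDist x w - ccwDist x u + 1 := ccwDist_of_lt hlt
  refine ⟨u, w, ⟨hu, hw, fun h => hlt.ne (h ▸ rfl), ?_⟩, mem_openArc.2 ?_⟩
  · refine Set.disjoint_right.2 fun b hb hbarc => ?_
    rw [mem_openArc] at hbarc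
    have hbu : ccwDist x b < ccwDist x u :=
      (humax b hb).lt_of_ne fun h => (ccwDist_pos.1 hbarc.1) (ccwDist_injective x h)
    rw [ccwDist_of_lt hbu, huw] at hbarc
    linarith [hwmin b hb, hbarc.2]
  · rw [hux, huw]
    constructor <;> linarith [(ccwDist_mem x u).2]

lemma isHole_iff (hB : B.Finite) (hB2 : B.Nontrivial) {G : Set S1} :
    IsHole B G ↔ ∃ u w, IsGap B u w ∧ G = openArc u w := by
  constructor
  · rintro ⟨x, hx, rfl⟩
    obtain ⟨u, w, h, hxuw⟩ := exists_isGap_mem_openArc hB hB2 hx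
    exact ⟨u, w, h, h.connectedComponentIn_eq hxuw⟩
  · rintro ⟨u, w, h, rfl⟩
    exact h.isHole

lemma IsGap.image {g : S1 → S1} (hg : OrientPresOn g B) (h : IsGap B u w) :
    IsGap (g '' B) (g u) (g w) := by
  obtain ⟨hu, hw, huw, hdisj⟩ := h
  refine ⟨mem_image_of_mem g hu, mem_image_of_mem g hw, fun he => huw (hg.1 hu hw he), ?_⟩
  refine Set.disjoint_right.2 ?_
  rintro _ ⟨b, hb, rfl⟩ (hgb : sbtw (g u) (g b) (g w))
  have hbu : b ≠ u := by rintro rfl; exact sbtw_irrefl_left hgb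
  have hbw : b ≠ w := by rintro rfl; exact sbtw_irrefl_right hgb
  exact sbtw_asymm hgb
    (hg.2 w hw b hb u hu (mem_openArc_swap huw hbu hbw (hdisj.notMem_of_mem_right hb)))

lemma IsHoleEnum.sum_len (hB : B.Finite) (hB2 : B.Nontrivial) (hH : IsHoleEnum B H) :
    ∑ k, len (H k) = 1 := by
  obtain ⟨hinj, hhole, hsurj, -⟩ := hH
  have hdisj : Pairwise (Function.onFun Disjoint H) := fun k l hkl => by
    obtain ⟨x, -, hx⟩ := hhole k
    obtain ⟨y, -, hy⟩ := hhole l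
    refine Set.disjoint_left.2 fun z hzk hzl => hkl (hinj ?_)
    rw [hx] at hzk ⊢
    rw [hy] at hzl ⊢
    exact (connectedComponentIn_eq hzk).trans (connectedComponentIn_eq hzl).symm
  have hunion : ⋃ k, H k = Bᶜ := by
    refine subset_antisymm (iUnion_subset fun k => ?_) fun x hx => ?_
    · obtain ⟨x, -, hx⟩ := hhole k
      exact hx ▸ connectedComponentIn_subset _ _
    · obtain ⟨k, hk⟩ := hsurj _ ⟨x, hx, rfl⟩
      exact mem_iUnion.2 ⟨k, hk ▸ mem_connectedComponentIn hx⟩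
  have hmeas : ∀ k, MeasurableSet (H k) := fun k => by
    obtain ⟨u, w, -, hk⟩ := (isHole_iff hB hB2).1 (hhole k)
    exact hk ▸ (isOpen_openArc u w).measurableSet
  have hvol : ∑ k, volume (H k) = 1 := by
    rw [← tsum_fintype (L := .unconditional _), ← measure_iUnion hdisj hmeas, hunion,
      measure_compl hB.isClosed.measurableSet (measure_ne_top _ _), hB.measure_zero,
      AddCircle.measure_univ]
    simp
  simp only [len]
  rw [← ENNReal.toReal_sum fun k _ => measure_ne_top _ _, hvol, ENNReal.toReal_one]

lemma len_pos_of_isHole (hB : B.Finite) (hB2 : B.Nontrivial) {G : Set S1} (hG : IsHole B G) :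
    0 < len G := by
  obtain ⟨u, w, h, rfl⟩ := (isHole_iff hB hB2).1 hG
  rw [len_openArc]
  exact ccwDist_pos.2 h.2.2.1.symm

lemma IsHoleEnum.monotone (hH : IsHoleEnum B H) :
    Monotone fun k => len (H k) :=
  hH.2.2.2

lemma IsHoleEnum.one_le_card_mul_of_tie (hB : B.Finite) (hB2 : B.Nontrivial)
    (hH : IsHoleEnum B H) {m a b : Fin N} (hm : N ≤ m.val + 3)
    (hab : a ≠ b) (hlen : len (H a) = len (H b)) (hma : len (H m) < len (H a)) :
    1 ≤ N * len (H a) :=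
  calc (1 : ℝ) = ∑ c, len (H c) := (hH.sum_len hB hB2).symm
    _ ≤ ∑ _c : Fin N, len (H a) :=
      Finset.sum_le_sum fun c _ => hH.monotone.le_of_tie_above hm hab hlen hma c
    _ = N * len (H a) := by simp

end Holes

section Image

variable {B G : Set S1} {N d : ℕ} {H H' : Fin N → Set S1}

lemma ccwDist_fd {u w : S1} (h : d * ccwDist u w < 1) :
    ccwDist (fd d u) (fd d w) = d * ccwDist u w :=
  ccwDist_eq_of_coe ⟨mul_nonneg d.cast_nonneg (ccwDist_mem u w).1, h⟩ <| by
    simp only [fd]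
    rw [← smul_sub, ← coe_ccwDist, ← AddCircle.coe_nsmul, nsmul_eq_mul]

lemma len_openArc_fd {u w : S1} (h : d * len (openArc u w) < 1) :
    len (openArc (fd d u) (fd d w)) = d * len (openArc u w) := by
  rw [len_openArc] at h ⊢
  rw [len_openArc, ccwDist_fd h]

lemma IsHole.exists_image {g : S1 → S1} (hB : B.Finite) (hB2 : B.Nontrivial)
    (hg : OrientPresOn g B) (hH' : IsHoleEnum (g '' B) H') (hG : IsHole B G) :
    ∃ u w j, IsGap B u w ∧ G = openArc u w ∧ H' j = openArc (g u) (g w) := by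
  obtain ⟨u, w, h, rfl⟩ := (isHole_iff hB hB2).1 hG
  obtain ⟨j, hj⟩ := hH'.2.2.1 _ (h.image hg).isHole
  exact ⟨u, w, j, h, rfl, hj⟩

lemma IsHoleEnum.exists_tie_image (hB : B.Finite) (hB2 : B.Nontrivial)
    (hg : OrientPresOn (fd d) B) (hH : IsHoleEnum B H) (hH' : IsHoleEnum (fd d '' B) H')
    {a b : Fin N} (hab : a ≠ b) (hlen : len (H a) = len (H b)) (hd : d * len (H a) < 1) :
    ∃ a' b', a' ≠ b' ∧ len (H' a') = d * len (H a) ∧ len (H' b') = d * len (H a) := by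
  obtain ⟨u, w, j, hgap, ha, hj⟩ := IsHole.exists_image hB hB2 hg hH' (hH.2.1 a)
  obtain ⟨u', w', j', hgap', hb, hj'⟩ := IsHole.exists_image hB hB2 hg hH' (hH.2.1 b)
  refine ⟨j, j', ?_, ?_, ?_⟩
  · rintro rfl
    obtain ⟨hu, hw⟩ := openArc_injective (hgap.image hg).2.2.1 (hj.symm.trans hj')
    exact hab (hH.1 (by rw [ha, hb, hg.1 hgap.1 hgap'.1 hu, hg.1 hgap.2.1 hgap'.2.1 hw]))
  · rw [ha] at hd ⊢
    rw [hj, len_openArc_fd hd]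
  · rw [hlen, hb] at hd ⊢
    rw [hj', len_openArc_fd hd]

end Image

section Orbit

variable {d N : ℕ} {T : Set S1} {H : ℕ → Fin N → Set S1}

lemma Wandering.finite_nontrivial (hw : Wandering d N T) (hN : 2 ≤ N) (n : ℕ) :
    ((fd d)^[n] '' T).Finite ∧ ((fd d)^[n] '' T).Nontrivial :=
  (one_lt_ncard_iff_nontrivial_and_finite.1 (by rw [(hw n 0).1]; omega)).symm

lemma image_iterate_succ {α : Type*} (g : α → α) (T : Set α) (n : ℕ) :
    g^[n + 1] '' T = g '' (g^[n] '' T) := by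
  rw [Function.iterate_succ', image_comp]

lemma mul_lt_one_of_lt {ε t : ℝ} (hN : 1 ≤ N) (hd : 0 < d) (hε : N * (d * ε) ≤ 1) (ht : t < ε) :
    d * t < 1 := by
  have hN' : (1 : ℝ) ≤ N := by exact_mod_cast hN
  have hd' : (0 : ℝ) < d := by exact_mod_cast hd
  have h1 : d * t < d * ε := mul_lt_mul_of_pos_left ht hd'
  rcases le_or_gt 0 (d * ε) with h | h
  · nlinarith
  · linarith

theorem eq_of_len_eq_of_lt (hd : 2 ≤ d) (hN : 2 ≤ N) (hw : Wandering d N T)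
    (hH : ∀ n, IsHoleEnum ((fd d)^[n] '' T) (H n))
    (hor : ∀ n, OrientPresOn (fd d) ((fd d)^[n] '' T)) {ε : ℝ} (hε : N * (d * ε) ≤ 1)
    {m : Fin N} (hm : N ≤ m.val + 3) (hsmall : ∀ n, len (H n m) < ε) {n : ℕ} {a b : Fin N}
    (ha : len (H n a) < ε) (hlen : len (H n a) = len (H n b)) : a = b := by
  by_contra hab
  have hd1 : (1 : ℝ) < d := by exact_mod_cast hd
  have key : ∀ k n t, t < ε → ε ≤ d ^ k * t →
      ¬ ∃ a b : Fin N, a ≠ b ∧ len (H n a) = t ∧ len (H n b) = t := by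
    intro k
    induction k with
    | zero => rintro n t ht hk -; simp only [pow_zero, one_mul] at hk; linarith
    | succ k ih =>
      rintro n t ht hk ⟨a, b, hab, ha, hb⟩
      have ht0 : 0 ≤ t := ha ▸ ENNReal.toReal_nonneg
      obtain ⟨hB, hB2⟩ := hw.finite_nontrivial (by omega) n
      have hH' := hH (n + 1)
      rw [image_iterate_succ] at hH'
      obtain ⟨a', b', hab', ha', hb'⟩ := (hH n).exists_tie_image hB hB2 (hor n) hH' hab
        (ha.trans hb.symm) (ha ▸ mul_lt_one_of_lt (by omega) (by omega) hε ht)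
      rw [ha] at ha' hb'
      rcases lt_or_ge (d * t) ε with hdt | hdt
      · exact ih (n + 1) (d * t) hdt (by rw [pow_succ] at hk; linarith) ⟨a', b', hab', ha', hb'⟩
      · obtain ⟨hB, hB2⟩ := hw.finite_nontrivial (by omega) (n + 1)
        have h1 := (hH (n + 1)).one_le_card_mul_of_tie hB hB2 hm hab' (ha'.trans hb'.symm)
          ((hsmall (n + 1)).trans_le (ha' ▸ hdt))
        rw [ha'] at h1
        nlinarith
  obtain ⟨hB, hB2⟩ := hw.finite_nontrivial (by omega) n
  have hpos : 0 < len (H n a) := len_pos_of_isHole hB hB2 ((hH n).2.1 a)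
  obtain ⟨k, hk⟩ := pow_unbounded_of_one_lt (ε / len (H n a)) hd1
  exact key k n _ ha (by rw [div_lt_iff₀ hpos] at hk; linarith) ⟨a, b, hab, rfl, hlen.symm⟩

end Orbit

/-- if i is not a jump (d·s_{N-2}(T_i) ≤ s_{N-2}(T_{i+1})), then the
image-hole of each of the N-2 smallest holes of T_i is the hole of the same index
in T_{i+1}. -/
theorem stmt16 (d N i : ℕ) (hd : 2 ≤ d) (hN : 3 ≤ N) (T : Set S1)
    (hw : Wandering d N T)
    (H : ℕ → Fin N → Set S1)
    (hH : ∀ n, IsHoleEnum ((fd d)^[n] '' T) (H n))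
    (hor : ∀ n, OrientPresOn (fd d) ((fd d)^[n] '' T))
    (εT : ℝ) (hε' : εT < 1 / (3 * (d : ℝ) * N))
    (hsmall : ∀ n, len (H n ⟨N - 3, by omega⟩) < εT)
    (hnotjump : (d : ℝ) * len (H i ⟨N - 3, by omega⟩) ≤ len (H (i + 1) ⟨N - 3, by omega⟩)) :
    ∀ k : Fin N, (k : ℕ) < N - 2 → ImageHoleRel (fd d) (H i k) (H (i + 1) k) := by
  intro k hk
  set m : Fin N := ⟨N - 3, by omega⟩
  have hm : N ≤ m.val + 3 := by simp only [m]; omega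
  have hkm : k ≤ m := Fin.le_def.2 (by simp only [m]; omega)
  have hε0 : 0 ≤ εT := ENNReal.toReal_nonneg.trans (hsmall 0).le
  have hNdε : N * (d * εT) ≤ 1 := by
    rw [lt_div_iff₀ (by positivity)] at hε'
    nlinarith
  obtain ⟨hB, hB2⟩ := hw.finite_nontrivial (by omega) i
  have hH' := hH (i + 1)
  rw [image_iterate_succ] at hH'
  choose u w σ hgap hG hσ using fun c => IsHole.exists_image hB hB2 (hor i) hH' ((hH i).2.1 c)
  have hsmall_of_le : ∀ c ≤ m, len (H i c) < εT := fun c hc =>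
    ((hH i).monotone hc).trans_lt (hsmall i)
  have hσlen : ∀ c ≤ m, len (H (i + 1) (σ c)) = d * len (H i c) := fun c hc => by
    have hd1 := mul_lt_one_of_lt (by omega) (by omega) hNdε (hsmall_of_le c hc)
    rw [hσ c, hG c, len_openArc_fd (hG c ▸ hd1)]
  have hnotie : ∀ n (a b : Fin N), len (H n a) < εT → len (H n a) = len (H n b) → a = b :=
    fun _ _ _ => eq_of_len_eq_of_lt hd (by omega) hw hH hor hNdε hm hsmall
  have hfix := (hH i).monotone.apply_eq_self_of_comp_eq (hH (i + 1)).monotone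
    (strictMono_mul_left_of_pos (by positivity : (0 : ℝ) < d)) hσlen
    (fun a ha b => hnotie i a b (hsmall_of_le a ha)) (hnotie (i + 1) m · (hsmall (i + 1)))
    hnotjump hkm
  exact ⟨u k, w k, (hgap k).2.2.1, hG k, (congrArg (H (i + 1)) hfix).symm.trans (hσ k)⟩
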